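/- Let X̄ ∈ C, V̄ ∈ L²(ℝ,μ), and for t ∈ ℝ let X_t := P_C(X̄ + tV̄) be the metric projection of X̄ + tV̄ onto C. Then H_{X_t} ⊆ S_{X_t}C, where S_{X_t}C denotes the L²(ℝ,μ)-closure of T_{X_t}C ∩ [(X̄ + tV̄) − X_t]^⊥. In particular, for every φ ∈ C_c^∞(ℝ), the function φ∘X_t belongs to T_{X_t}C and satisfies ⟨(X̄ + tV̄) − X_t, φ∘X_t⟩ = 0 in L²(ℝ,μ). -/

import Mathlib

open MeasureTheory Filter Topology Set
open scoped RealInnerProductSpace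

/-- The support of a Borel measure: the set of points all of whose open
neighborhoods have positive measure. -/
def msupport {α : Type*} [TopologicalSpace α] [MeasurableSpace α] (ν : Measure α) : Set α :=
  {z : α | ∀ U : Set α, IsOpen U → z ∈ U → 0 < ν U}

/-- A monotone subset of `ℝ × ℝ`. -/
def MonotoneSet (Γ : Set (ℝ × ℝ)) : Prop :=
  ∀ p ∈ Γ, ∀ q ∈ Γ, 0 ≤ (p.1 - q.1) * (p.2 - q.2)

/-- The transport plan `γ_X = (id, X) # μ` induced by `X ∈ L²(ℝ, μ)`. -/
noncomputable def plan (μ : Measure ℝ) (X : MeasureTheory.Lp ℝ 2 μ) : Measure (ℝ × ℝ) :=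
  Measure.map (fun m => (m, X m)) μ

/-- The cone of monotone maps in `L²(ℝ, μ)`. -/
def monoCone (μ : Measure ℝ) : Set (MeasureTheory.Lp ℝ 2 μ) :=
  {X | MonotoneSet (msupport (plan μ X))}

/-- `H_X`: the `L²(ℝ,μ)`-closure of `{φ ∘ X : φ ∈ C_c^∞(ℝ)}`. -/
def Hspace (μ : Measure ℝ) (X : MeasureTheory.Lp ℝ 2 μ) : Set (MeasureTheory.Lp ℝ 2 μ) :=
  closure {W : MeasureTheory.Lp ℝ 2 μ | ∃ φ : ℝ → ℝ, ContDiff ℝ (⊤ : ℕ∞) φ ∧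
    HasCompactSupport φ ∧ (W : ℝ → ℝ) =ᵐ[μ] fun m => φ (X m)}

lemma msupport_compl_null {α : Type*} [TopologicalSpace α] [MeasurableSpace α]
    [SecondCountableTopology α] (ν : Measure α) :
    ν (msupport ν)ᶜ = 0 := by
  obtain ⟨T, hTc, hTS, hT⟩ := TopologicalSpace.isOpen_sUnion_countable
    {U | IsOpen U ∧ ν U = 0} (fun U hU => hU.1)
  have hsub : (msupport ν)ᶜ ⊆ ⋃₀ T := by
    intro z hz
    rw [hT]
    simp only [msupport, mem_compl_iff, mem_setOf_eq, not_forall] at hz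
    obtain ⟨U, hUo, hzU, hUν⟩ := hz
    exact ⟨U, ⟨hUo, le_antisymm (not_lt.1 hUν) zero_le⟩, hzU⟩
  refine measure_mono_null hsub ?_
  exact (measure_sUnion_null_iff hTc).2 fun U hU => (hTS hU).2

lemma monotoneSet_closure {Γ : Set (ℝ × ℝ)} (h : MonotoneSet Γ) :
    MonotoneSet (closure Γ) := by
  have step : ∀ q ∈ Γ, ∀ p ∈ closure Γ, 0 ≤ (p.1 - q.1) * (p.2 - q.2) := by
    intro q hq
    have hcl : IsClosed {p : ℝ × ℝ | 0 ≤ (p.1 - q.1) * (p.2 - q.2)} :=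
      isClosed_le continuous_const (by fun_prop)
    exact hcl.closure_subset_iff.2 (fun p hp => h p hp q hq)
  intro p hp q hq
  have hcl : IsClosed {r : ℝ × ℝ | 0 ≤ (p.1 - r.1) * (p.2 - r.2)} :=
    isClosed_le continuous_const (by fun_prop)
  refine hcl.closure_subset_iff.2 (fun r hr => ?_) hq
  have h2 := step r hr p hp
  show (0:ℝ) ≤ (p.1 - r.1) * (p.2 - r.2)
  nlinarith

lemma monotoneSet_image {Γ : Set (ℝ × ℝ)} (h : MonotoneSet Γ) {g : ℝ → ℝ} (hg : Monotone g) :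
    MonotoneSet ((fun p : ℝ × ℝ => (p.1, g p.2)) '' Γ) := by
  rintro _ ⟨p, hp, rfl⟩ _ ⟨q, hq, rfl⟩
  simp only
  rcases lt_trichotomy p.1 q.1 with hlt | heq | hgt
  · have hle : p.2 ≤ q.2 := by nlinarith [h p hp q hq]
    have := hg hle
    nlinarith
  · simp [heq]
  · have hle : q.2 ≤ p.2 := by nlinarith [h p hp q hq]
    have := hg hle
    nlinarith

lemma mono_comp (μ : Measure ℝ) (Z Y : MeasureTheory.Lp ℝ 2 μ) (hZ : Z ∈ monoCone μ)
    {g : ℝ → ℝ} (hgm : Monotone g) (hgc : Continuous g)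
    (hY : (Y : ℝ → ℝ) =ᵐ[μ] fun m => g (Z m)) : Y ∈ monoCone μ := by
  have hg : Measurable (fun p : ℝ × ℝ => (p.1, g p.2)) :=
    measurable_fst.prodMk (hgc.measurable.comp measurable_snd)
  have hf : Measurable (fun m : ℝ => (m, (Z : ℝ → ℝ) m)) :=
    measurable_id.prodMk (Lp.stronglyMeasurable Z).measurable
  have hmap : plan μ Y = Measure.map (fun p : ℝ × ℝ => (p.1, g p.2)) (plan μ Z) := by
    have h1 : plan μ Y = Measure.map (fun m => (m, g (Z m))) μ := by
      refine Measure.map_congr ?_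
      filter_upwards [hY] with m hm
      simp [hm]
    rw [h1, plan]
    rw [show (fun m : ℝ => (m, g (Z m)))
        = (fun p : ℝ × ℝ => (p.1, g p.2)) ∘ (fun m : ℝ => (m, (Z : ℝ → ℝ) m)) from rfl]
    exact (Measure.map_map hg hf).symm
  have hsub : msupport (plan μ Y) ⊆
      closure ((fun p : ℝ × ℝ => (p.1, g p.2)) '' msupport (plan μ Z)) := by
    intro z hz
    by_contra hzc
    have hUo : IsOpen (closure ((fun p : ℝ × ℝ => (p.1, g p.2)) '' msupport (plan μ Z)))ᶜ :=
      isClosed_closure.isOpen_compl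
    have hpos := hz _ hUo hzc
    rw [hmap, Measure.map_apply hg hUo.measurableSet] at hpos
    have hsub2 : (fun p : ℝ × ℝ => (p.1, g p.2)) ⁻¹'
        (closure ((fun p : ℝ × ℝ => (p.1, g p.2)) '' msupport (plan μ Z)))ᶜ
        ⊆ (msupport (plan μ Z))ᶜ := by
      intro p hp hpS
      exact hp (subset_closure (mem_image_of_mem _ hpS))
    exact absurd (measure_mono_null hsub2 (msupport_compl_null _)) (by simpa using hpos.ne')
  exact fun p hp q hq =>
    monotoneSet_closure (monotoneSet_image hZ hgm) p (hsub hp) q (hsub hq)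

/-- Along the projected trajectory `X_t = P_C(X̄ + t V̄)`, the space `H_{X_t}` is contained in
the closure of `T_{X_t}C ∩ [(X̄ + t V̄) − X_t]^⊥`; in particular `φ ∘ X_t` belongs to
`T_{X_t}C` and is orthogonal to `(X̄ + t V̄) − X_t` for every `φ ∈ C_c^∞(ℝ)`. -/
theorem stmt_10 (μ : Measure ℝ) [IsProbabilityMeasure μ]
    (hμ2 : Integrable (fun x => x ^ 2) μ)
    (Xbar : MeasureTheory.Lp ℝ 2 μ) (hXbar : Xbar ∈ monoCone μ)
    (Vbar : MeasureTheory.Lp ℝ 2 μ) (X : ℝ → MeasureTheory.Lp ℝ 2 μ)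
    (hXmem : ∀ t : ℝ, X t ∈ monoCone μ)
    (hXproj : ∀ t : ℝ, ∀ Z ∈ monoCone μ,
      ‖(Xbar + t • Vbar) - X t‖ ≤ ‖(Xbar + t • Vbar) - Z‖)
    (t : ℝ) :
    Hspace μ (X t) ⊆
      closure ({W | ∃ c : ℝ, 0 < c ∧ ∃ Y ∈ monoCone μ, W = c • (Y - X t)} ∩
        {W : MeasureTheory.Lp ℝ 2 μ | ⟪(Xbar + t • Vbar) - X t, W⟫ = 0}) ∧
    ∀ φ : ℝ → ℝ, ContDiff ℝ (⊤ : ℕ∞) φ → HasCompactSupport φ →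
      ∀ W : MeasureTheory.Lp ℝ 2 μ, (W : ℝ → ℝ) =ᵐ[μ] (fun m => φ ((X t) m)) →
        (∃ c : ℝ, 0 < c ∧ ∃ Y ∈ monoCone μ, W = c • (Y - X t)) ∧
          ⟪(Xbar + t • Vbar) - X t, W⟫ = 0 := by
  have key : ∀ φ : ℝ → ℝ, ContDiff ℝ (⊤ : ℕ∞) φ → HasCompactSupport φ →
      ∀ W : MeasureTheory.Lp ℝ 2 μ, (W : ℝ → ℝ) =ᵐ[μ] (fun m => φ ((X t) m)) →
        (∃ c : ℝ, 0 < c ∧ ∃ Y ∈ monoCone μ, W = c • (Y - X t)) ∧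
          ⟪(Xbar + t • Vbar) - X t, W⟫ = 0 := by
    intro φ hφ hφs W hW
    obtain ⟨C, hC⟩ := (hφs.deriv).exists_bound_of_continuous (hφ.continuous_deriv (by simp))
    have hC0 : (0:ℝ) ≤ C := le_trans (norm_nonneg _) (hC 0)
    set ε : ℝ := (C + 1)⁻¹ with hεdef
    have hεpos : 0 < ε := by positivity
    have hφdiff : Differentiable ℝ φ := hφ.differentiable (by simp)
    have hmono : ∀ a : ℝ, |a| ≤ ε → Monotone (fun x => x + a * φ x) := by
      intro a ha
      have hdiff : Differentiable ℝ (fun x => x + a * φ x) :=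
        differentiable_id.add (hφdiff.const_mul a)
      refine monotone_of_deriv_nonneg hdiff (fun x => ?_)
      have hd : HasDerivAt (fun x => x + a * φ x) (1 + a * deriv φ x) x :=
        (hasDerivAt_id x).add ((hφdiff x).hasDerivAt.const_mul a)
      rw [hd.deriv]
      have h1 : |a * deriv φ x| ≤ ε * C := by
        rw [abs_mul]
        refine mul_le_mul ha ?_ (abs_nonneg _) hεpos.le
        simpa [Real.norm_eq_abs] using hC x
      have h2 : ε * C < 1 := by
        rw [hεdef, inv_mul_lt_iff₀ (by positivity)]
        linarith
      have := abs_le.1 h1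
      nlinarith
    have hmem : ∀ a : ℝ, |a| ≤ ε → X t + a • W ∈ monoCone μ := by
      intro a ha
      refine mono_comp μ (X t) _ (hXmem t) (hmono a ha)
        (continuous_id.add (continuous_const.mul hφ.continuous)) ?_
      filter_upwards [Lp.coeFn_add (X t) (a • W), Lp.coeFn_smul a W, hW] with m h1 h2 h3
      simp only [h1, Pi.add_apply, h2, Pi.smul_apply, smul_eq_mul, h3]
    set U := (Xbar + t • Vbar) - X t with hU
    have hkey : ∀ a : ℝ, |a| ≤ ε → 2 * (a * ⟪U, W⟫) ≤ a ^ 2 * ‖W‖ ^ 2 := by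
      intro a ha
      have h := hXproj t _ (hmem a ha)
      have heq : (Xbar + t • Vbar) - (X t + a • W) = U - a • W := by
        rw [hU]; abel
      rw [heq] at h
      have hsq : ‖U‖ ^ 2 ≤ ‖U - a • W‖ ^ 2 := pow_le_pow_left₀ (norm_nonneg U) h 2
      have hexp : ‖U - a • W‖ ^ 2 = ‖U‖ ^ 2 - 2 * (a * ⟪U, W⟫) + a ^ 2 * ‖W‖ ^ 2 := by
        rw [norm_sub_sq_real, real_inner_smul_right, norm_smul, Real.norm_eq_abs,
          mul_pow, sq_abs]
      rw [hexp] at hsq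
      linarith
    have habs : ∀ s : ℝ, 0 < s → s ≤ ε → |⟪U, W⟫| ≤ s * ‖W‖ ^ 2 / 2 := by
      intro s hs hsε
      have h1 := hkey s (by rwa [abs_of_pos hs])
      have h2 := hkey (-s) (by rwa [abs_neg, abs_of_pos hs])
      rw [abs_le]
      constructor <;> nlinarith
    have hr0 : ⟪U, W⟫ = 0 := by
      by_contra hne
      have hpos : 0 < |⟪U, W⟫| := abs_pos.2 hne
      have hd0 : 0 < |⟪U, W⟫| / (‖W‖ ^ 2 + 1) := by positivity
      set s : ℝ := min ε (|⟪U, W⟫| / (‖W‖ ^ 2 + 1)) with hs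
      have hs0 : 0 < s := lt_min hεpos hd0
      have h1 := habs s hs0 (min_le_left _ _)
      have hle : s ≤ |⟪U, W⟫| / (‖W‖ ^ 2 + 1) := min_le_right _ _
      have hW0 : (0:ℝ) ≤ ‖W‖ ^ 2 := sq_nonneg _
      have hmul : |⟪U, W⟫| / (‖W‖ ^ 2 + 1) * (‖W‖ ^ 2 + 1) = |⟪U, W⟫| :=
        div_mul_cancel₀ _ (by positivity)
      nlinarith [mul_le_mul_of_nonneg_right hle hW0]
    refine ⟨⟨ε⁻¹, by positivity, X t + ε • W, hmem ε (le_of_eq (abs_of_pos hεpos)), ?_⟩, hr0⟩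
    rw [add_sub_cancel_left, smul_smul, inv_mul_cancel₀ hεpos.ne', one_smul]
  refine ⟨?_, key⟩
  unfold Hspace
  refine closure_mono ?_
  rintro W ⟨φ, hφ, hφs, hW⟩
  exact ⟨(key φ hφ hφs W hW).1, (key φ hφ hφs W hW).2⟩
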